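/- arXiv:2507.16269 — 5 statements merged into one kernel-verified Lean document; each statement's English description precedes it below -/
import Mathlib

section
/- Let φ = (1+√5)/2 be the golden ratio. For all real numbers Θ, γ, w with 0 ≤ γ ≤ Θ and 0 ≤ w, one has (1 − w)·γ + w + (Θ − γ) + (φ⁴/(φ³ + Θ − γ))·w ≤ Θ + (1 + φ⁴/(φ³ + Θ))·w. -/
open Real

/-- Lemma 3 of the paper: the total time of the three steps of the
crown-activation strategy is within the claimed bound. -/
theorem stmt_1 (Θ γ w : ℝ) (hγ : 0 ≤ γ) (hγΘ : γ ≤ Θ) (hw : 0 ≤ w) :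
    let φ : ℝ := (1 + Real.sqrt 5) / 2
    (1 - w) * γ + w + (Θ - γ) + (φ ^ 4 / (φ ^ 3 + Θ - γ)) * w
      ≤ Θ + (1 + φ ^ 4 / (φ ^ 3 + Θ)) * w := by
  intro φ
  have hs : Real.sqrt 5 ^ 2 = 5 := Real.sq_sqrt (by norm_num)
  have hs2 : (2 : ℝ) ≤ Real.sqrt 5 := by
    nlinarith [Real.sqrt_nonneg 5]
  have hφ : (1.5 : ℝ) ≤ φ := by
    simp only [φ]; nlinarith
  have hφ0 : (0 : ℝ) ≤ φ := by linarith
  have hφ2 : (2.25 : ℝ) ≤ φ ^ 2 := by nlinarith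
  have hφ3 : (3 : ℝ) ≤ φ ^ 3 := by nlinarith
  have hΘ : 0 ≤ Θ := le_trans hγ hγΘ
  have hd1 : 0 < φ ^ 3 + Θ - γ := by nlinarith
  have hd2 : 0 < φ ^ 3 + Θ := by nlinarith
  have hφ4 : φ ^ 4 ≤ (φ ^ 3 + Θ - γ) * (φ ^ 3 + Θ) := by
    nlinarith [mul_nonneg (sub_nonneg.2 hγΘ) hΘ, pow_nonneg hφ0 4,
      mul_nonneg (pow_nonneg hφ0 3) hΘ, mul_nonneg (pow_nonneg hφ0 3) (sub_nonneg.2 hγΘ),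
      mul_nonneg (pow_nonneg hφ0 4) (by nlinarith : (0:ℝ) ≤ φ ^ 2 - 1)]
  have key : φ ^ 4 / (φ ^ 3 + Θ - γ) ≤ φ ^ 4 / (φ ^ 3 + Θ) + γ := by
    have h : φ ^ 4 / (φ ^ 3 + Θ) + γ = (φ ^ 4 + γ * (φ ^ 3 + Θ)) / (φ ^ 3 + Θ) := by
      field_simp
    rw [h, div_le_div_iff₀ hd1 hd2]
    nlinarith [mul_le_mul_of_nonneg_left hφ4 hγ]
  nlinarith [mul_le_mul_of_nonneg_right key hw]
end

section
/- For every real number α, 2·sin(α/2) + 2·sin((3π − 2α)/4) ≤ 4·sin(3π/8), and equality holds for α = 3π/4. -/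
open Real

/-- The sum of chord lengths `2 sin(α/2) + 2 sin((3π − 2α)/4)` is maximized at
`α = 3π/4`, with maximum value `4 sin(3π/8)`. -/
theorem stmt_2 :
    (∀ α : ℝ, 2 * Real.sin (α / 2) + 2 * Real.sin ((3 * π - 2 * α) / 4)
      ≤ 4 * Real.sin (3 * π / 8)) ∧
    2 * Real.sin ((3 * π / 4) / 2)
        + 2 * Real.sin ((3 * π - 2 * (3 * π / 4)) / 4)
      = 4 * Real.sin (3 * π / 8) := by
  have hpos : 0 < Real.sin (3 * π / 8) := by
    apply Real.sin_pos_of_pos_of_lt_pi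
    · positivity
    · nlinarith [Real.pi_pos]
  constructor
  · intro α
    have lem : ∀ x t : ℝ, Real.sin (x + t) + Real.sin (x - t)
        = 2 * Real.sin x * Real.cos t := by
      intro x t; rw [Real.sin_add, Real.sin_sub]; ring
    have h1 : α / 2 = 3 * π / 8 + (α / 2 - 3 * π / 8) := by ring
    have h2 : (3 * π - 2 * α) / 4 = 3 * π / 8 - (α / 2 - 3 * π / 8) := by ring
    have key : Real.sin (α / 2) + Real.sin ((3 * π - 2 * α) / 4)
        = 2 * Real.sin (3 * π / 8) * Real.cos (α / 2 - 3 * π / 8) := by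
      rw [h1, h2, lem]; ring_nf
    have hc := Real.cos_le_one (α / 2 - 3 * π / 8)
    nlinarith [key, hpos, hc]
  · ring_nf
end

section
/- Let θ₁ ≤ θ₂ ≤ θ₃ be real numbers with θ₃ − θ₁ ≤ 3π/2, and let a_j = (cos θ_j, sin θ_j) ∈ ℝ² for j = 1, 2, 3 (points on the unit circle, with the Euclidean norm on ℝ²). Then ‖a₁ − a₂‖₂ + ‖a₂ − a₃‖₂ ≤ 4·sin(3π/8). -/
/-!
By the half-angle formula each chord has length `2 sin(δ/2)`, where `δ ∈ [0, 2π]` is the angle it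
subtends. Writing `sin x + sin y = 2 sin((x + y)/2) cos((x - y)/2)` bounds the two chords together by
`4 sin((θ₃ - θ₁)/4)`, and `(θ₃ - θ₁)/4 ≤ 3π/8 ≤ π/2` lies where `sin` is increasing.
-/

open Real

lemma norm_sub_eq_two_mul_abs_sin_half (θ φ : ℝ) (v w : EuclideanSpace ℝ (Fin 2))
    (hv : ⇑v = ![cos θ, sin θ]) (hw : ⇑w = ![cos φ, sin φ]) :
    ‖v - w‖ = 2 * |sin ((θ - φ) / 2)| := by
  have hsq : ‖v - w‖ ^ 2 = (2 * |sin ((θ - φ) / 2)|) ^ 2 := by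
    rw [EuclideanSpace.norm_sq_eq, Fin.sum_univ_two]
    simp only [PiLp.sub_apply, hv, hw, Matrix.cons_val_zero, Matrix.cons_val_one,
      Real.norm_eq_abs, sq_abs, cos_sub_cos, sin_sub_sin, mul_pow]
    nlinarith [sin_sq_add_cos_sq ((θ + φ) / 2)]
  exact (pow_left_inj₀ (norm_nonneg _) (by positivity) two_ne_zero).1 hsq

lemma norm_sub_eq_two_mul_sin_half_of_le {θ φ : ℝ} (hθφ : θ ≤ φ) (hφ : φ - θ ≤ 2 * π)
    (v w : EuclideanSpace ℝ (Fin 2))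
    (hv : ⇑v = ![cos θ, sin θ]) (hw : ⇑w = ![cos φ, sin φ]) :
    ‖v - w‖ = 2 * sin ((φ - θ) / 2) := by
  rw [norm_sub_eq_two_mul_abs_sin_half θ φ v w hv hw, ← neg_sub φ θ, neg_div, sin_neg, abs_neg,
    abs_of_nonneg (sin_nonneg_of_nonneg_of_le_pi (by linarith) (by linarith))]

lemma sin_add_sin_le_two_mul_sin_half {x y : ℝ} (h₀ : 0 ≤ x + y) (h₂π : x + y ≤ 2 * π) :
    sin x + sin y ≤ 2 * sin ((x + y) / 2) := by
  have hsin : 0 ≤ sin ((x + y) / 2) :=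
    sin_nonneg_of_nonneg_of_le_pi (by linarith) (by linarith)
  rw [sin_add_sin]
  nlinarith [cos_le_one ((x - y) / 2)]

/-- For three points on the unit circle with angular span at most `3π/2`,
the sum of the lengths of the two consecutive chords is at most `4 sin(3π/8)`. -/
theorem stmt_3 (θ₁ θ₂ θ₃ : ℝ) (h12 : θ₁ ≤ θ₂) (h23 : θ₂ ≤ θ₃)
    (hspan : θ₃ - θ₁ ≤ 3 * π / 2)
    (a : ℝ → EuclideanSpace ℝ (Fin 2))
    (ha : ∀ θ, a θ = ![Real.cos θ, Real.sin θ]) :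
    ‖a θ₁ - a θ₂‖ + ‖a θ₂ - a θ₃‖ ≤ 4 * Real.sin (3 * π / 8) := by
  have hπ := pi_pos
  rw [norm_sub_eq_two_mul_sin_half_of_le h12 (by linarith) _ _ (ha θ₁) (ha θ₂),
    norm_sub_eq_two_mul_sin_half_of_le h23 (by linarith) _ _ (ha θ₂) (ha θ₃)]
  have hchords : sin ((θ₂ - θ₁) / 2) + sin ((θ₃ - θ₂) / 2) ≤ 2 * sin ((θ₃ - θ₁) / 4) := by
    convert sin_add_sin_le_two_mul_sin_half (x := (θ₂ - θ₁) / 2) (y := (θ₃ - θ₂) / 2)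
      (by linarith) (by linarith) using 3
    ring
  have hmono : sin ((θ₃ - θ₁) / 4) ≤ sin (3 * π / 8) :=
    sin_le_sin_of_le_of_le_pi_div_two (by linarith) (by linarith) (by linarith)
  linarith
end

section
/- Let m ≥ 1 be a natural number and let q : ℕ → ℝ³ be a sequence of points in ℝ³ equipped with the ℓ¹ norm ‖(x,y,z)‖₁ = |x| + |y| + |z|. Write q(i) = (x_i, y_i, z_i) and a(i) = (x_i, y_i). Assume: q(0) = (0,0,0); the z-coordinates are nondecreasing, i.e. z_i ≤ z_{i+1} for all i < m; z_m ≤ 1; ‖a(1) − a(0)‖₁ ≤ 1; and for every i ≥ 1, ‖a(i+1) − a(i)‖₁ ≤ 2^((2−i)/2) if i is even and ‖a(i+1) − a(i)‖₁ ≤ 2^((3−i)/2) if i is odd (real exponents). Then ∑_{i=0}^{m−1} ‖q(i+1) − q(i)‖₁ ≤ 10. -/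
open Real Finset

/-- Core estimate of Theorem 5 of the paper: along a root-to-leaf path of the
wake-up tree inside the upper half of the unit ℓ¹ ball of ℝ³, the total ℓ¹
travel length is at most 10. -/
theorem stmt_5 (m : ℕ) (hm : 1 ≤ m) (q : ℕ → PiLp 1 (fun _ : Fin 3 => ℝ))
    (a : ℕ → PiLp 1 (fun _ : Fin 2 => ℝ))
    (ha : ∀ i, a i = ![q i 0, q i 1])
    (hq0 : q 0 = 0)
    (hz : ∀ i < m, q i 2 ≤ q (i + 1) 2)
    (hzm : q m 2 ≤ 1)
    (h0 : ‖a 1 - a 0‖ ≤ 1)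
    (heven : ∀ i : ℕ, 1 ≤ i → Even i →
      ‖a (i + 1) - a i‖ ≤ (2 : ℝ) ^ (((2 : ℝ) - i) / 2))
    (hodd : ∀ i : ℕ, 1 ≤ i → Odd i →
      ‖a (i + 1) - a i‖ ≤ (2 : ℝ) ^ (((3 : ℝ) - i) / 2)) :
    ∑ i ∈ Finset.range m, ‖q (i + 1) - q i‖ ≤ 10 := by
  -- split each 3D norm into planar part + z part
  have hsplit : ∀ i, ‖q (i + 1) - q i‖ = ‖a (i + 1) - a i‖ + |q (i + 1) 2 - q i 2| := by
    intro i
    rw [PiLp.norm_eq_sum (p := 1) (by norm_num), PiLp.norm_eq_sum (p := 1) (by norm_num)]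
    simp [Fin.sum_univ_three, Fin.sum_univ_two, ha]
  have hsum : ∑ i ∈ Finset.range m, ‖q (i + 1) - q i‖
      = ∑ i ∈ Finset.range m, ‖a (i + 1) - a i‖
        + ∑ i ∈ Finset.range m, |q (i + 1) 2 - q i 2| := by
    rw [← Finset.sum_add_distrib]; exact Finset.sum_congr rfl fun i _ => hsplit i
  -- z part telescopes
  have hzpart : ∑ i ∈ Finset.range m, |q (i + 1) 2 - q i 2| ≤ 1 := by
    have he : ∑ i ∈ Finset.range m, |q (i + 1) 2 - q i 2|
        = ∑ i ∈ Finset.range m, (q (i + 1) 2 - q i 2) := by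
      refine Finset.sum_congr rfl fun i hi => ?_
      exact abs_of_nonneg (by linarith [hz i (Finset.mem_range.mp hi)])
    rw [he, Finset.sum_range_sub (fun i => q i 2)]
    have : q 0 2 = 0 := by rw [hq0]; rfl
    linarith [hzm]
  -- geometric ratio
  set r : ℝ := (2 : ℝ) ^ (-(1 : ℝ) / 2) with hr
  have hr0 : 0 < r := Real.rpow_pos_of_pos (by norm_num) _
  have hrsq : r ^ 2 = 1 / 2 := by
    rw [hr, ← Real.rpow_natCast ((2:ℝ) ^ (-(1:ℝ)/2)) 2, ← Real.rpow_mul (by norm_num)]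
    norm_num
  have hr57 : r ≤ 5 / 7 := by nlinarith [hrsq, hr0.le]
  have hr1 : r < 1 := lt_of_le_of_lt hr57 (by norm_num)
  -- uniform bound on planar steps for i ≥ 1
  have hstep : ∀ i : ℕ, 1 ≤ i → ‖a (i + 1) - a i‖ ≤ 2 * r ^ (i - 1) := by
    intro i hi
    have hpow : (2 : ℝ) * r ^ (i - 1) = (2 : ℝ) ^ (((3 : ℝ) - i) / 2) := by
      rw [hr, ← Real.rpow_natCast ((2:ℝ) ^ (-(1:ℝ)/2)) (i - 1),
        ← Real.rpow_mul (by norm_num), Nat.cast_sub hi]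
      nth_rewrite 1 [show (2:ℝ) = (2:ℝ) ^ (1:ℝ) from (Real.rpow_one 2).symm]
      rw [← Real.rpow_add (by norm_num)]
      norm_num
      ring_nf
    rw [hpow]
    rcases Nat.even_or_odd i with hev | hod
    · refine (heven i hi hev).trans ?_
      exact Real.rpow_le_rpow_of_exponent_le (by norm_num) (by linarith)
    · exact hodd i hi hod
  -- planar part bound
  have hapart : ∑ i ∈ Finset.range m, ‖a (i + 1) - a i‖ ≤ 9 := by
    obtain ⟨n, rfl⟩ := Nat.exists_eq_add_of_le hm
    rw [show 1 + n = n + 1 by ring, Finset.sum_range_succ']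
    have hgeom : ∑ i ∈ Finset.range n, r ^ i ≤ 1 / (1 - r) := by
      have h1r : 0 < 1 - r := by linarith
      rw [geom_sum_eq hr1.ne n]
      have heq : (r ^ n - 1) / (r - 1) = (1 - r ^ n) / (1 - r) := by
        rw [← neg_div_neg_eq]; ring_nf
      rw [heq]
      gcongr
      nlinarith [pow_nonneg hr0.le n]
    have h1r : 0 < 1 - r := by linarith
    have hinv : 1 / (1 - r) ≤ 7 / 2 := by
      rw [div_le_iff₀ h1r]; linarith
    have hterm : ∑ i ∈ Finset.range n, ‖a (i + 1 + 1) - a (i + 1)‖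
        ≤ ∑ i ∈ Finset.range n, 2 * r ^ i := by
      refine Finset.sum_le_sum fun i _ => ?_
      have := hstep (i + 1) (by omega)
      simpa using this
    have h2 : ∑ i ∈ Finset.range n, 2 * r ^ i = 2 * ∑ i ∈ Finset.range n, r ^ i := by
      rw [Finset.mul_sum]
    nlinarith [hgeom, hterm, h0]
  linarith [hsum, hzpart, hapart]
end

section
/- Let m ≥ 1 be a natural number and let q : ℕ → ℝ³ be a sequence of points in ℝ³ equipped with the Euclidean (ℓ₂) norm. Write q(i) = (x_i, y_i, z_i) and a(i) = (x_i, y_i) ∈ ℝ². Assume: q(0) = (0,0,0); the z-coordinates are nondecreasing, i.e. z_i ≤ z_{i+1} for all i < m; z_m ≤ 1; ‖a(1) − a(0)‖₂ ≤ 1; ‖a(2) − a(1)‖₂ + ‖a(3) − a(2)‖₂ ≤ 4·sin(3π/8); and for every i ≥ 3, ‖a(i+1) − a(i)‖₂ ≤ √5 · 2^((2−i)/2) if i is even and ‖a(i+1) − a(i)‖₂ ≤ √2 · 2^((3−i)/2) if i is odd. Then ∑_{i=0}^{m−1} ‖q(i+1) − q(i)‖₂ ≤ 2 + 4·sin(3π/8)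 + 2√2 + √5. -/
open Real Finset

noncomputable def bseq : ℕ → ℝ := fun i =>
  if Odd i then Real.sqrt 2 * (2:ℝ) ^ (((3:ℝ) - i) / 2)
  else Real.sqrt 5 * (2:ℝ) ^ (((2:ℝ) - i) / 2)

noncomputable def cseq : ℕ → ℝ := fun n =>
  if Odd n then 2 * Real.sqrt 2 * (2:ℝ) ^ (((3:ℝ) - n) / 2)
      + 2 * Real.sqrt 5 * (2:ℝ) ^ (((1:ℝ) - n) / 2)
  else (2 * Real.sqrt 5 + 2 * Real.sqrt 2) * (2:ℝ) ^ (((2:ℝ) - n) / 2)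

lemma cseq_nonneg (n : ℕ) : 0 ≤ cseq n := by
  unfold cseq; split <;> positivity

lemma cseq_step (n : ℕ) : cseq n = bseq n + cseq (n + 1) := by
  have h2 : (0:ℝ) < 2 := by norm_num
  have key : ∀ x y : ℝ, (2:ℝ) ^ (x + y) = 2 ^ x * 2 ^ y := fun x y => Real.rpow_add h2 x y
  rcases Nat.even_or_odd n with h | h
  · have h1 : ¬ Odd n := by simpa using h
    have h2' : Odd (n + 1) := Even.add_one h
    simp only [cseq, bseq, h1, h2', if_true, if_false, Nat.cast_add, Nat.cast_one]
    rw [show ((3:ℝ) - (n + 1)) / 2 = ((2:ℝ) - n) / 2 by ring,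
        show ((1:ℝ) - (n + 1)) / 2 = ((2:ℝ) - n) / 2 + (-1) by ring, key]
    rw [Real.rpow_neg_one]
    ring
  · have h2' : ¬ Odd (n + 1) := by simp [Nat.odd_add_one, h]
    simp only [cseq, bseq, h, h2', if_true, if_false, Nat.cast_add, Nat.cast_one]
    rw [show ((3:ℝ) - n) / 2 = ((1:ℝ) - n) / 2 + 1 by ring,
        show ((2:ℝ) - (n + 1)) / 2 = ((1:ℝ) - n) / 2 by ring, key]
    rw [Real.rpow_one]
    ring

lemma cseq_three : cseq 3 = 2 * Real.sqrt 2 + Real.sqrt 5 := by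
  simp only [cseq, show Odd 3 from by decide, if_true, Nat.cast_ofNat]
  rw [show ((3:ℝ) - 3) / 2 = (0 : ℝ) by ring, show ((1:ℝ) - 3) / 2 = (-1 : ℝ) by ring,
    Real.rpow_zero, Real.rpow_neg_one]
  ring

lemma bsum (n : ℕ) (hn : 3 ≤ n) : ∑ i ∈ Finset.Ico 3 n, bseq i = cseq 3 - cseq n := by
  induction n, hn using Nat.le_induction with
  | base => simp
  | succ n hn ih =>
    rw [Finset.sum_Ico_succ_top hn, ih, cseq_step n]; ring

/-- Core estimate of Theorem 8 of the paper: along a root-to-leaf path of the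
wake-up tree inside the upper half of the unit Euclidean ball of ℝ³, the total
Euclidean travel length is at most `2 + 4 sin(3π/8) + 2√2 + √5`. -/
theorem stmt_8 (m : ℕ) (hm : 1 ≤ m) (q : ℕ → EuclideanSpace ℝ (Fin 3))
    (a : ℕ → EuclideanSpace ℝ (Fin 2))
    (ha : ∀ i, a i = ![q i 0, q i 1])
    (hq0 : q 0 = 0)
    (hz : ∀ i < m, q i 2 ≤ q (i + 1) 2)
    (hzm : q m 2 ≤ 1)
    (h0 : ‖a 1 - a 0‖ ≤ 1)
    (h12 : ‖a 2 - a 1‖ + ‖a 3 - a 2‖ ≤ 4 * Real.sin (3 * π / 8))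
    (heven : ∀ i : ℕ, 3 ≤ i → Even i →
      ‖a (i + 1) - a i‖ ≤ Real.sqrt 5 * (2 : ℝ) ^ (((2 : ℝ) - i) / 2))
    (hodd : ∀ i : ℕ, 3 ≤ i → Odd i →
      ‖a (i + 1) - a i‖ ≤ Real.sqrt 2 * (2 : ℝ) ^ (((3 : ℝ) - i) / 2)) :
    ∑ i ∈ Finset.range m, ‖q (i + 1) - q i‖
      ≤ 2 + 4 * Real.sin (3 * π / 8) + 2 * Real.sqrt 2 + Real.sqrt 5 := by
  -- pointwise bound
  have hpt : ∀ i, ‖q (i + 1) - q i‖ ≤ ‖a (i + 1) - a i‖ + |q (i + 1) 2 - q i 2| := by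
    intro i
    rw [EuclideanSpace.norm_eq, EuclideanSpace.norm_eq]
    simp only [ha, PiLp.sub_apply, Fin.sum_univ_three, Fin.sum_univ_two,
      Matrix.cons_val_zero, Matrix.cons_val_one, Matrix.head_cons, Real.norm_eq_abs, sq_abs]
    set A := (q (i+1) 0 - q i 0) ^ 2 + (q (i+1) 1 - q i 1) ^ 2 with hA
    set z := q (i+1) 2 - q i 2 with hzdef
    have hA0 : 0 ≤ A := by positivity
    have h1 : Real.sqrt (A + z ^ 2) ≤ Real.sqrt ((Real.sqrt A + |z|) ^ 2) := by
      apply Real.sqrt_le_sqrt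
      nlinarith [Real.sq_sqrt hA0, Real.sqrt_nonneg A, abs_nonneg z, sq_abs z]
    rwa [Real.sqrt_sq (by positivity)] at h1
  have step1 : ∑ i ∈ Finset.range m, ‖q (i + 1) - q i‖
      ≤ (∑ i ∈ Finset.range m, ‖a (i + 1) - a i‖) + (q m 2 - q 0 2) := by
    have := Finset.sum_le_sum (f := fun i => ‖q (i + 1) - q i‖)
      (g := fun i => ‖a (i + 1) - a i‖ + (q (i + 1) 2 - q i 2))
      (s := Finset.range m) (by
        intro i hi
        have him := Finset.mem_range.mp hi
        have habs : |q (i + 1) 2 - q i 2| = q (i + 1) 2 - q i 2 :=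
          abs_of_nonneg (by linarith [hz i him])
        calc ‖q (i + 1) - q i‖ ≤ ‖a (i + 1) - a i‖ + |q (i + 1) 2 - q i 2| := hpt i
          _ = _ := by rw [habs])
    rwa [Finset.sum_add_distrib, Finset.sum_range_sub (fun i => q i 2)] at this
  have hq02 : q 0 2 = 0 := by rw [hq0]; rfl
  -- planar sum bound
  set M := max m 3 with hM
  have hsub : ∑ i ∈ Finset.range m, ‖a (i + 1) - a i‖
      ≤ ∑ i ∈ Finset.range M, ‖a (i + 1) - a i‖ :=
    Finset.sum_le_sum_of_subset_of_nonneg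
      (Finset.range_subset_range.mpr (le_max_left m 3)) (fun i _ _ => norm_nonneg _)
  have hsplit : ∑ i ∈ Finset.range M, ‖a (i + 1) - a i‖
      = (∑ i ∈ Finset.range 3, ‖a (i + 1) - a i‖)
        + ∑ i ∈ Finset.Ico 3 M, ‖a (i + 1) - a i‖ := by
    rw [Finset.range_eq_Ico]
    exact (Finset.sum_Ico_consecutive _ (Nat.zero_le 3) (le_max_right m 3)).symm
  have hhead : ∑ i ∈ Finset.range 3, ‖a (i + 1) - a i‖
      ≤ 1 + 4 * Real.sin (3 * π / 8) := by
    rw [Finset.sum_range_succ, Finset.sum_range_succ, Finset.sum_range_one]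
    linarith
  have htail : ∑ i ∈ Finset.Ico 3 M, ‖a (i + 1) - a i‖
      ≤ 2 * Real.sqrt 2 + Real.sqrt 5 := by
    calc ∑ i ∈ Finset.Ico 3 M, ‖a (i + 1) - a i‖ ≤ ∑ i ∈ Finset.Ico 3 M, bseq i := by
          apply Finset.sum_le_sum
          intro i hi
          obtain ⟨hi3, _⟩ := Finset.mem_Ico.mp hi
          unfold bseq
          rcases Nat.even_or_odd i with h | h
          · rw [if_neg (by simpa using h)]; exact heven i hi3 h
          · rw [if_pos h]; exact hodd i hi3 h
      _ = cseq 3 - cseq M := bsum M (le_max_right m 3)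
      _ ≤ cseq 3 := by linarith [cseq_nonneg M]
      _ = 2 * Real.sqrt 2 + Real.sqrt 5 := cseq_three
  have := hsplit ▸ hsub
  rw [hq02] at step1
  linarith
end
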